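/- Let m ≥ 1, let Ω ⊆ ℝ^m be an open set, and let B ⊆ ℝ^m be the origin-centered ball with the same Gaussian volume as Ω, i.e. γ_m(B) = γ_m(Ω). If h : [0, ∞) → [0, ∞) is nondecreasing and bounded, then ∫_Ω h(|x|) dγ_m(x) ≥ ∫_B h(|x|) dγ_m(x). -/

import Mathlib

/-!
The bathtub principle: `Ω` and the ball `B` share `Ω ∩ B`, so equal Gaussian volume forces
`γ(Ω \ B) = γ(B \ Ω)`. The radial weight `h ‖x‖` is at most `h R` on `B \ Ω` and at least `h R`
on `Ω \ B`, so trading `B \ Ω` for `Ω \ B` can only increase the integral. Boundedness of `h`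
and finiteness of `γ` (the Gaussian integral) make every integral involved finite.
-/

open MeasureTheory Real Set

noncomputable section

/-- The `m`-dimensional Gaussian measure `dγ_m = (2π)^{-m/2} e^{-|x|²/2} dx`. -/
def gaussianMeasure (m : ℕ) : Measure (EuclideanSpace ℝ (Fin m)) :=
  volume.withDensity fun x =>
    ENNReal.ofReal ((2 * π) ^ (-(m : ℝ) / 2) * Real.exp (-‖x‖ ^ 2 / 2))

instance isFiniteMeasure_gaussianMeasure (m : ℕ) : IsFiniteMeasure (gaussianMeasure m) := by
  have hexp : Integrable (fun x : EuclideanSpace ℝ (Fin m) => Real.exp (-(1 / 2) * ‖x‖ ^ 2)) := by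
    refine Integrable.of_integral_ne_zero ?_
    rw [GaussianFourier.integral_rexp_neg_mul_sq_norm one_half_pos]
    positivity
  refine isFiniteMeasure_withDensity_ofReal
    ((hexp.const_mul ((2 * π) ^ (-(m : ℝ) / 2))).2.congr (Filter.Eventually.of_forall fun x => ?_))
  ring_nf

theorem setIntegral_le_setIntegral_of_measure_eq {α : Type*} [MeasurableSpace α]
    {μ : Measure α} {A B : Set α} {f : α → ℝ} (c : ℝ)
    (hA : MeasurableSet A) (hB : MeasurableSet B) (hμ : μ A = μ B) (hμB : μ B ≠ ⊤)
    (hfA : IntegrableOn f A μ) (hfB : IntegrableOn f B μ)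
    (hle : ∀ x ∈ B \ A, f x ≤ c) (hge : ∀ x ∈ A \ B, c ≤ f x) :
    ∫ x in B, f x ∂μ ≤ ∫ x in A, f x ∂μ := by
  have hμA : μ A ≠ ⊤ := hμ ▸ hμB
  have hsdiff : μ (A \ B) = μ (B \ A) :=
    measure_sdiff_symm hA.nullMeasurableSet hB.nullMeasurableSet hμ
      (measure_ne_top_of_subset inter_subset_left hμA)
  have hBA : ∫ x in B \ A, f x ∂μ ≤ ∫ x in A \ B, f x ∂μ :=
    calc ∫ x in B \ A, f x ∂μ
        ≤ ∫ _ in B \ A, c ∂μ :=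
          setIntegral_mono_on (hfB.mono_set sdiff_subset)
            (integrableOn_const (measure_ne_top_of_subset sdiff_subset hμB)) (hB.diff hA) hle
      _ = ∫ _ in A \ B, c ∂μ := by simp only [setIntegral_const, Measure.real, hsdiff]
      _ ≤ ∫ x in A \ B, f x ∂μ :=
          setIntegral_mono_on (integrableOn_const (measure_ne_top_of_subset sdiff_subset hμA))
            (hfA.mono_set sdiff_subset) (hA.diff hB) hge
  rw [← integral_inter_add_sdiff hA hfB, ← integral_inter_add_sdiff hB hfA, inter_comm]
  gcongr

theorem measurable_comp_norm_of_monotoneOn {E : Type*} [NormedAddCommGroup E] [MeasurableSpace E]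
    [OpensMeasurableSpace E] {h : ℝ → ℝ} (hh : MonotoneOn h (Ici 0)) :
    Measurable fun x : E => h ‖x‖ := by
  have hmax : Monotone fun r => h (max r 0) := fun r s hrs =>
    hh (le_max_right r 0) (le_max_right s 0) (max_le_max_right 0 hrs)
  simpa only [Function.comp_def, max_eq_left (norm_nonneg _)] using
    hmax.measurable.comp (measurable_norm (α := E))

theorem gaussian_symmetrization_monotone_general
    (m : ℕ)
    (Ω : Set (EuclideanSpace ℝ (Fin m))) (hΩ : IsOpen Ω)
    (R : ℝ)
    (hvol : gaussianMeasure m (Metric.ball (0 : EuclideanSpace ℝ (Fin m)) R)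
      = gaussianMeasure m Ω)
    (h : ℝ → ℝ)
    (hmono : MonotoneOn h (Ici (0 : ℝ)))
    (hbdd : ∃ C : ℝ, ∀ r, 0 ≤ r → h r ≤ C) :
    ∫ x in Ω, h ‖x‖ ∂gaussianMeasure m ≥
      ∫ x in Metric.ball (0 : EuclideanSpace ℝ (Fin m)) R, h ‖x‖ ∂gaussianMeasure m := by
  obtain ⟨C, hC⟩ := hbdd
  have hint : Integrable (fun x => h ‖x‖) (gaussianMeasure m) :=
    Integrable.of_bound (measurable_comp_norm_of_monotoneOn hmono).aestronglyMeasurable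
      (max |h 0| |C|) (Filter.Eventually.of_forall fun x => abs_le_max_abs_abs
        (hmono (le_refl (0 : ℝ)) (norm_nonneg x) (norm_nonneg x)) (hC _ (norm_nonneg x)))
  -- The level is `h (max R 0)` rather than `h R`, so that `R < 0` needs no separate case.
  refine setIntegral_le_setIntegral_of_measure_eq (h (max R 0)) hΩ.measurableSet
    measurableSet_ball hvol.symm (measure_ne_top _ _) hint.integrableOn hint.integrableOn ?_ ?_
  · rintro x ⟨hxB, -⟩
    rw [mem_ball_zero_iff] at hxB
    exact hmono (norm_nonneg x) (le_max_right R 0) (le_max_of_le_left hxB.le)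
  · rintro x ⟨-, hxB⟩
    rw [mem_ball_zero_iff, not_lt] at hxB
    exact hmono (le_max_right R 0) (norm_nonneg x) (max_le hxB (norm_nonneg x))

/-- **Lemma 3.1 (reversed form).** Let `Ω ⊆ ℝ^m` be an open set and `B` the
origin-centered ball with the same Gaussian volume as `Ω`. If
`h : [0,∞) → [0,∞)` is nondecreasing and bounded, then
`∫_Ω h(|x|) dγ_m ≥ ∫_B h(|x|) dγ_m`. -/
theorem gaussian_symmetrization_monotone
    (m : ℕ) (hm : 1 ≤ m)
    (Ω : Set (EuclideanSpace ℝ (Fin m))) (hΩ : IsOpen Ω)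
    (R : ℝ) (hR : 0 ≤ R)
    (hvol : gaussianMeasure m (Metric.ball (0 : EuclideanSpace ℝ (Fin m)) R)
      = gaussianMeasure m Ω)
    (h : ℝ → ℝ)
    (hnonneg : ∀ r, 0 ≤ r → 0 ≤ h r)
    (hmono : MonotoneOn h (Ici (0 : ℝ)))
    (hbdd : ∃ C : ℝ, ∀ r, 0 ≤ r → h r ≤ C) :
    ∫ x in Ω, h ‖x‖ ∂gaussianMeasure m ≥
      ∫ x in Metric.ball (0 : EuclideanSpace ℝ (Fin m)) R, h ‖x‖ ∂gaussianMeasure m :=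
  gaussian_symmetrization_monotone_general m Ω hΩ R hvol h hmono hbdd
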